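/- Let s ≥ 2, 0 ≤ t ≤ s−2 be integers, r a positive integer coprime to s, and λ = ω_r^n a primitive r-th root of unity (gcd(n,r)=1). Suppose a finite linear combination ∑_{j=1}^J αⱼ·G(λⱼ) of geometric series G(λⱼ) = ∑_{m≥0} λⱼ^m x^m with distinct λⱼ and nonzero αⱼ is fixed by φ_{s,t}, where λ_k = λ for some k. Then λ^{β_{s,t}(ord_r(s))} = 1; equivalently, r divides n·β_{s,t}(ord_r(s)), hence (since gcd(n,r)=1) r divides β_{s,t}(ord_r(s)), so r is distinguished with respect to (s,t). -/

import Mathlib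

/-- `β_{s,t}(k) = t·∑_{i=0}^{k-1} s^i`. -/
def beta (s t : ℕ) (k : ℕ) : ℕ := t * ∑ i ∈ Finset.range k, s ^ i

/-- Linear independence of geometric sequences with distinct ratios. -/
private lemma geom_indep {F : Finset ℂ} {c : ℂ → ℂ}
    (h : ∀ m : ℕ, ∑ μ ∈ F, c μ * μ ^ m = 0) : ∀ μ ∈ F, c μ = 0 := by
  intro μ₀ hμ₀
  set P : Polynomial ℂ := ∏ ν ∈ F.erase μ₀, (Polynomial.X - Polynomial.C ν) with hP
  have key : ∑ μ ∈ F, c μ * P.eval μ = 0 := by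
    have e : ∀ μ ∈ F, c μ * P.eval μ
        = ∑ i ∈ Finset.range (P.natDegree + 1), P.coeff i * (c μ * μ ^ i) := by
      intro μ _
      rw [Polynomial.eval_eq_sum_range, Finset.mul_sum]
      exact Finset.sum_congr rfl fun i _ => by ring
    rw [Finset.sum_congr rfl e, Finset.sum_comm]
    apply Finset.sum_eq_zero
    intro i _
    rw [← Finset.mul_sum, h i, mul_zero]
  have hsingle : ∑ μ ∈ F, c μ * P.eval μ = c μ₀ * P.eval μ₀ := by
    apply Finset.sum_eq_single_of_mem μ₀ hμ₀
    intro ν hν hne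
    have h0 : P.eval ν = 0 := by
      rw [hP, Polynomial.eval_prod]
      exact Finset.prod_eq_zero (Finset.mem_erase.mpr ⟨hne, hν⟩) (by simp)
    rw [h0, mul_zero]
  have hPne : P.eval μ₀ ≠ 0 := by
    rw [hP, Polynomial.eval_prod]
    apply Finset.prod_ne_zero_iff.mpr
    intro ν hν
    simp only [Polynomial.eval_sub, Polynomial.eval_X, Polynomial.eval_C, sub_ne_zero]
    exact fun hc => (Finset.mem_erase.mp hν).1 hc.symm
  have := hsingle ▸ key
  rcases mul_eq_zero.mp this with h' | h'
  · exact h'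
  · exact absurd h' hPne

/-- If a linear combination `∑ αⱼ G(λⱼ)` of geometric series with distinct ratios and
nonzero coefficients is fixed by `φ_{s,t}`, and one ratio `λ_k` is a primitive `r`-th
root of unity `ω_r^n`, then `λ_k^{β_{s,t}(ord_r(s))} = 1`; equivalently `r` divides
`n·β_{s,t}(ord_r(s))`, hence `r` divides `β_{s,t}(ord_r(s))`, i.e. `r` is distinguished
with respect to `(s,t)`. -/
theorem fixed_combination_distinguished (s t : ℕ) (hs : 2 ≤ s) (ht : t ≤ s - 2)
    (r : ℕ) (hr : 0 < r) (hcop : Nat.Coprime r s)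
    (n : ℤ) (hn : IsCoprime n (r : ℤ))
    (lam : ℂ) (hlam : lam = Complex.exp (2 * Real.pi * Complex.I * n / r))
    (J : ℕ) (α lamf : Fin J → ℂ)
    (hα : ∀ j, α j ≠ 0) (hinj : Function.Injective lamf)
    (k : Fin J) (hk : lamf k = lam)
    (hfix : ∀ m : ℕ, (∑ j, α j * lamf j ^ (s * m + t)) = ∑ j, α j * lamf j ^ m) :
    lam ^ beta s t (orderOf ((s : ZMod r))) = 1 ∧
    (r : ℤ) ∣ n * (beta s t (orderOf ((s : ZMod r))) : ℤ) ∧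
    (r : ℤ) ∣ (beta s t (orderOf ((s : ZMod r))) : ℤ) := by
  classical
  have hr0 : (r : ℂ) ≠ 0 := Nat.cast_ne_zero.mpr hr.ne'
  -- λ^r = 1
  have hlr : lam ^ r = 1 := by
    rw [hlam, ← Complex.exp_nat_mul]
    rw [show (r : ℂ) * (2 * Real.pi * Complex.I * n / r) = n * (2 * Real.pi * Complex.I) by
      field_simp]
    exact Complex.exp_int_mul_two_pi_mul_I n
  set d := orderOf ((s : ZMod r)) with hd
  -- r ∣ s^d - 1
  have hsd : s ^ d ≡ 1 [MOD r] := by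
    have h1 : ((s : ZMod r)) ^ d = 1 := pow_orderOf_eq_one _
    have h2 : ((s ^ d : ℕ) : ZMod r) = ((1 : ℕ) : ZMod r) := by push_cast; exact h1
    exact (ZMod.natCast_eq_natCast_iff _ _ _).mp h2
  have hlsd : lam ^ s ^ d = lam := by
    obtain ⟨q, hq⟩ := (Nat.modEq_iff_dvd' (Nat.one_le_pow _ _ (by omega))).mp hsd.symm
    have hsd1 : s ^ d = r * q + 1 := by
      have : 1 ≤ s ^ d := Nat.one_le_pow _ _ (by omega)
      omega
    rw [hsd1, pow_add, pow_mul, hlr, one_pow, one_mul, pow_one]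
  -- set up coefficient extraction
  set F : Finset ℂ := (Finset.image lamf Finset.univ) ∪
      (Finset.image (fun j => lamf j ^ s) Finset.univ) with hF
  set c : ℂ → ℂ := fun μ =>
      (∑ j ∈ Finset.univ.filter (fun j => lamf j ^ s = μ), α j * lamf j ^ t)
      - (∑ j ∈ Finset.univ.filter (fun j => lamf j = μ), α j) with hc
  have hzero : ∀ m : ℕ, ∑ μ ∈ F, c μ * μ ^ m = 0 := by
    intro m
    have h1 : ∑ μ ∈ F, (∑ j ∈ Finset.univ.filter (fun j => lamf j ^ s = μ),
        α j * lamf j ^ t) * μ ^ m = ∑ j, α j * lamf j ^ (s * m + t) := by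
      have e : ∀ μ ∈ F, (∑ j ∈ Finset.univ.filter (fun j => lamf j ^ s = μ),
          α j * lamf j ^ t) * μ ^ m
          = ∑ j ∈ Finset.univ.filter (fun j => lamf j ^ s = μ),
              α j * lamf j ^ (s * m + t) := by
        intro μ _
        rw [Finset.sum_mul]
        apply Finset.sum_congr rfl
        intro j hj
        rw [Finset.mem_filter] at hj
        rw [← hj.2, pow_add, pow_mul]
        ring
      rw [Finset.sum_congr rfl e]
      exact Finset.sum_fiberwise_of_maps_to
        (fun j _ => Finset.mem_union_right _
          (Finset.mem_image_of_mem _ (Finset.mem_univ j))) _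
    have h2 : ∑ μ ∈ F, (∑ j ∈ Finset.univ.filter (fun j => lamf j = μ), α j) * μ ^ m
        = ∑ j, α j * lamf j ^ m := by
      have e : ∀ μ ∈ F, (∑ j ∈ Finset.univ.filter (fun j => lamf j = μ), α j) * μ ^ m
          = ∑ j ∈ Finset.univ.filter (fun j => lamf j = μ), α j * lamf j ^ m := by
        intro μ _
        rw [Finset.sum_mul]
        apply Finset.sum_congr rfl
        intro j hj
        rw [Finset.mem_filter] at hj
        rw [hj.2]
      rw [Finset.sum_congr rfl e]
      exact Finset.sum_fiberwise_of_maps_to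
        (fun j _ => Finset.mem_union_left _
          (Finset.mem_image_of_mem _ (Finset.mem_univ j))) _
    simp only [hc, sub_mul, Finset.sum_sub_distrib]
    rw [h1, h2, hfix m, sub_self]
  have hE : ∀ i : Fin J,
      ∑ j ∈ Finset.univ.filter (fun j => lamf j ^ s = lamf i), α j * lamf j ^ t = α i := by
    intro i
    have hmem : lamf i ∈ F :=
      Finset.mem_union_left _ (Finset.mem_image_of_mem _ (Finset.mem_univ i))
    have h0 := geom_indep hzero (lamf i) hmem
    simp only [hc] at h0
    have hfilter : Finset.univ.filter (fun j => lamf j = lamf i) = {i} := by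
      ext j
      simp [Finset.mem_filter, hinj.eq_iff]
    rw [hfilter, Finset.sum_singleton] at h0
    exact sub_eq_zero.mp h0
  -- each fiber is nonempty, pick representatives
  have hne : ∀ i : Fin J, (Finset.univ.filter (fun j => lamf j ^ s = lamf i)).Nonempty := by
    intro i
    by_contra hcon
    rw [Finset.not_nonempty_iff_eq_empty] at hcon
    have h0 := hE i
    rw [hcon, Finset.sum_empty] at h0
    exact hα i h0.symm
  choose τ hτ using hne
  have hτs : ∀ i, lamf (τ i) ^ s = lamf i := fun i => (Finset.mem_filter.mp (hτ i)).2
  have hτinj : Function.Injective τ := by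
    intro i i' h
    apply hinj
    rw [← hτs i, ← hτs i', h]
  have hτbij : Function.Bijective τ := Finite.injective_iff_bijective.mp hτinj
  have hsingle : ∀ i, Finset.univ.filter (fun j => lamf j ^ s = lamf i) = {τ i} := by
    intro i
    ext j
    simp only [Finset.mem_filter, Finset.mem_univ, true_and, Finset.mem_singleton]
    constructor
    · intro hj
      obtain ⟨i', rfl⟩ := hτbij.2 j
      have : lamf i' = lamf i := by rw [← hτs i', hj]
      rw [hinj this]
    · rintro rfl
      exact hτs i
  have hατ : ∀ i, α (τ i) * lamf (τ i) ^ t = α i := by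
    intro i
    have h0 := hE i
    rwa [hsingle i, Finset.sum_singleton] at h0
  set e := Equiv.ofBijective τ hτbij with he
  have happ : ∀ j, τ (e.symm j) = j := fun j => e.apply_symm_apply j
  have hσlam : ∀ j, lamf (e.symm j) = lamf j ^ s := by
    intro j
    rw [← hτs (e.symm j), happ j]
  have hσα : ∀ j, α (e.symm j) = α j * lamf j ^ t := by
    intro j
    have h1 := hατ (e.symm j)
    rw [happ j] at h1
    exact h1.symm
  -- orbit
  have horbit : ∀ i : ℕ, lamf ((fun j => e.symm j)^[i] k) = lam ^ s ^ i ∧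
      α ((fun j => e.symm j)^[i] k) = α k * lam ^ beta s t i := by
    intro i
    induction i with
    | zero => simp [hk, beta]
    | succ i ih =>
      rw [Function.iterate_succ_apply']
      have hb : beta s t (i + 1) = beta s t i + s ^ i * t := by
        simp [beta, Finset.sum_range_succ, mul_add, mul_comm]
      constructor
      · rw [hσlam, ih.1, ← pow_mul, ← pow_succ]
      · rw [hσα, ih.1, ih.2, hb, pow_add, ← pow_mul]
        ring
  have hfixk : (fun j => e.symm j)^[d] k = k := by
    apply hinj
    rw [(horbit d).1, hlsd, hk]
  have hβ1 : lam ^ beta s t d = 1 := by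
    have h0 := (horbit d).2
    rw [hfixk] at h0
    have : α k * lam ^ beta s t d = α k * 1 := by rw [mul_one]; exact h0.symm
    exact mul_left_cancel₀ (hα k) this
  refine ⟨hβ1, ?_, ?_⟩
  · -- r ∣ n * β
    have hexp : Complex.exp ((n * (beta s t d : ℤ) : ℤ) * (2 * Real.pi * Complex.I) / r) = 1 := by
      rw [← hβ1, hlam, ← Complex.exp_nat_mul]
      congr 1
      push_cast
      ring
    obtain ⟨m, hm⟩ := Complex.exp_eq_one_iff.mp hexp
    have hπ : (2 * Real.pi * Complex.I : ℂ) ≠ 0 := by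
      simp [Real.pi_ne_zero, Complex.I_ne_zero]
    have hnb : ((n * (beta s t d : ℤ) : ℤ) : ℂ) = ((m * r : ℤ) : ℂ) := by
      field_simp at hm
      push_cast
      apply mul_left_cancel₀ hπ
      push_cast at hm
      linear_combination (2 * (Real.pi : ℂ) * Complex.I) * hm
    have hint : n * (beta s t d : ℤ) = m * r := by exact_mod_cast hnb
    exact ⟨m, by linarith⟩
  · have hdvd1 : (r : ℤ) ∣ n * (beta s t d : ℤ) := by
      have hexp : Complex.exp ((n * (beta s t d : ℤ) : ℤ) * (2 * Real.pi * Complex.I) / r) = 1 := by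
        rw [← hβ1, hlam, ← Complex.exp_nat_mul]
        congr 1
        push_cast
        ring
      obtain ⟨m, hm⟩ := Complex.exp_eq_one_iff.mp hexp
      have hπ : (2 * Real.pi * Complex.I : ℂ) ≠ 0 := by
        simp [Real.pi_ne_zero, Complex.I_ne_zero]
      have hnb : ((n * (beta s t d : ℤ) : ℤ) : ℂ) = ((m * r : ℤ) : ℂ) := by
        field_simp at hm
        push_cast
        apply mul_left_cancel₀ hπ
        push_cast at hm
        linear_combination (2 * (Real.pi : ℂ) * Complex.I) * hm
      have hint : n * (beta s t d : ℤ) = m * r := by exact_mod_cast hnb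
      exact ⟨m, by linarith⟩
    exact hn.symm.dvd_of_dvd_mul_left hdvd1
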